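/- arXiv:math/0609515 — 2 statements merged into one kernel-verified Lean document; each statement's English description precedes it below -/
import Mathlib

section
/- Every irreducible B(ξ)-representation (V, ρ, X) is isomorphic to W(η) for some character η of Γ with η|_Λ = ξ, where an isomorphism of B(ξ)-representations is a linear isomorphism intertwining X and every ρ(h). -/
noncomputable section

/-- `(V, ρ, X)` is a `B(ξ)`-representation: `ρ` is a group homomorphism (recorded via
multiplicativity and unitality), `ρ(h)∘X = χ₁(h)·(X∘ρ(h))` for all `h`, `X^r = id`,
and `ρ(g) = ξ(g)·id` for all `g ∈ Λ`. -/
def IsBRep {Γ : Type*} [CommGroup Γ] (χ₁ : Γ →* ℂˣ) (Λ : Subgroup Γ) (ξ : ↥Λ →* ℂˣ)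
    (r : ℕ) {V : Type*} [AddCommGroup V] [Module ℂ V]
    (ρ : Γ → Module.End ℂ V) (X : Module.End ℂ V) : Prop :=
  (∀ a b : Γ, ρ (a * b) = ρ a * ρ b) ∧ ρ 1 = 1 ∧
  (∀ h : Γ, ρ h * X = (χ₁ h : ℂ) • (X * ρ h)) ∧
  X ^ r = 1 ∧
  ∀ g : Λ, ρ (g : Γ) = (ξ g : ℂ) • (1 : Module.End ℂ V)

/-- A subspace `W` is stable under `X` and all `ρ(h)`. -/
def BStable {Γ : Type*} {V : Type*} [AddCommGroup V] [Module ℂ V]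
    (ρ : Γ → Module.End ℂ V) (X : Module.End ℂ V) (W : Submodule ℂ V) : Prop :=
  (∀ v ∈ W, X v ∈ W) ∧ ∀ h : Γ, ∀ v ∈ W, ρ h v ∈ W

/-- Irreducibility: `V ≠ 0` and the only stable subspaces are `0` and `V`. -/
def BIrred {Γ : Type*} {V : Type*} [AddCommGroup V] [Module ℂ V]
    (ρ : Γ → Module.End ℂ V) (X : Module.End ℂ V) : Prop :=
  (∃ v : V, v ≠ 0) ∧ ∀ W : Submodule ℂ V, BStable ρ X W → W = ⊥ ∨ W = ⊤

/-- The action of `h ∈ Γ` on `W(η)`, with `ρ(h)·f_i = η(h)·χ₁(h)^i·f_i` on the basis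
`(f_i)_{i ∈ ℤ/rℤ}` of `ℤ/rℤ → ℂ`. -/
def wRho (r : ℕ) {Γ : Type*} [CommGroup Γ] (χ₁ η : Γ →* ℂˣ) (h : Γ) :
    Module.End ℂ (ZMod r → ℂ) where
  toFun v := fun i => (η h : ℂ) * (χ₁ h : ℂ) ^ i.val * v i
  map_add' v w := by funext i; simp [mul_add]
  map_smul' a v := by funext i; simp [smul_eq_mul]; ring

/-- The operator `X` on `W(η)`, with `X·f_i = f_{i+1}` (indices modulo `r`). -/
def wX (r : ℕ) : Module.End ℂ (ZMod r → ℂ) where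
  toFun v := fun i => v (i - 1)
  map_add' _ _ := rfl
  map_smul' _ _ := rfl

/-!
A common eigenvector `v` of the commuting operators `ρ h` gives a character `η` extending `ξ`.
Since `ρ h ∘ X = χ₁ h • X ∘ ρ h`, each `X ^ i v` is an eigenvector of every `ρ h`, with
eigenvalue `η h * χ₁ h ^ i`. The image of `χ₁` is a finite subgroup of `ℂˣ`, hence cyclic, so
some `χ₁ h₀` has order exactly `r`; the `X ^ i v` for `i < r` are then eigenvectors of `ρ h₀` with
distinct eigenvalues, hence linearly independent. Their span is stable under `X` and `ρ`, so it
is `V` by irreducibility, and in this basis `X` and `ρ` act exactly as on `W(η)`.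
-/

open Module

namespace Module.End

variable {K V ι : Type*} [Field K] [IsAlgClosed K] [AddCommGroup V] [Module K V]
  [FiniteDimensional K V]

theorem exists_mem_ne_zero_forall_apply_eq_smul_of_commute (f : ι → End K V)
    (hf : ∀ i j, Commute (f i) (f j)) (s : Finset ι) (W : Submodule K V) (hW : W ≠ ⊥)
    (hWf : ∀ i, ∀ x ∈ W, f i x ∈ W) :
    ∃ v ∈ W, v ≠ 0 ∧ ∀ i ∈ s, ∃ μ : K, f i v = μ • v := by
  classical
  induction s using Finset.induction_on generalizing W with
  | empty =>
    obtain ⟨v, hvW, hv⟩ := Submodule.exists_mem_ne_zero_of_ne_bot hW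
    exact ⟨v, hvW, hv, by simp⟩
  | insert i s _ ih =>
    have : Nontrivial W := Submodule.nontrivial_iff_ne_bot.2 hW
    obtain ⟨μ, hμ⟩ := exists_eigenvalue ((f i).restrict (hWf i))
    obtain ⟨⟨w, hwW⟩, hw⟩ := hμ.exists_hasEigenvector
    have hwμ : f i w = μ • w := congrArg Subtype.val hw.apply_eq_smul
    have hW' : W ⊓ (f i).eigenspace μ ≠ ⊥ :=
      (Submodule.ne_bot_iff _).2 ⟨w, ⟨hwW, mem_eigenspace_iff.2 hwμ⟩,
        fun h => hw.2 (Subtype.ext h)⟩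
    have hW'f : ∀ j, ∀ x ∈ W ⊓ (f i).eigenspace μ, f j x ∈ W ⊓ (f i).eigenspace μ :=
      fun j x hx => ⟨hWf j x hx.1, mapsTo_genEigenspace_of_comm (hf i j) μ 1 hx.2⟩
    obtain ⟨v, hvW', hv, hvs⟩ := ih _ hW' hW'f
    refine ⟨v, hvW'.1, hv, fun j hj => ?_⟩
    rcases Finset.mem_insert.1 hj with rfl | hj
    · exact ⟨μ, mem_eigenspace_iff.1 hvW'.2⟩
    · exact hvs j hj

theorem exists_ne_zero_forall_apply_eq_smul_of_commute [Finite ι] [Nontrivial V]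
    (f : ι → End K V) (hf : ∀ i j, Commute (f i) (f j)) :
    ∃ v : V, v ≠ 0 ∧ ∃ μ : ι → K, ∀ i, f i v = μ i • v := by
  have := Fintype.ofFinite ι
  obtain ⟨v, -, hv, hμ⟩ := exists_mem_ne_zero_forall_apply_eq_smul_of_commute f hf
    Finset.univ ⊤ top_ne_bot (fun _ _ _ => Submodule.mem_top)
  choose μ hμ using fun i => hμ i (Finset.mem_univ i)
  exact ⟨v, hv, μ, hμ⟩

end Module.End

theorem MonoidHom.exists_orderOf_apply_eq_orderOf {G R : Type*} [Group G] [Finite G]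
    [CommRing R] [IsDomain R] (f : G →* Rˣ) : ∃ g, orderOf (f g) = orderOf f := by
  have : Finite f.range := Set.finite_range f
  obtain ⟨⟨_, g, rfl⟩, hg⟩ := IsCyclic.exists_generator (α := f.range)
  refine ⟨g, orderOf_eq_orderOf_iff.2 fun n => ⟨fun hn => ?_, fun hn => by
    rw [← MonoidHom.pow_apply, hn, MonoidHom.one_apply]⟩⟩
  refine MonoidHom.ext fun x => ?_
  obtain ⟨k, hk⟩ := Subgroup.mem_zpowers_iff.1 (hg ⟨f x, x, rfl⟩)
  have hk' : f g ^ k = f x := congrArg Subtype.val hk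
  rw [MonoidHom.pow_apply, MonoidHom.one_apply, ← hk', ← zpow_natCast, ← zpow_mul, mul_comm,
    zpow_mul, zpow_natCast, hn, one_zpow]

theorem MonoidHom.orderOf_pos {G M : Type*} [Group G] [Finite G] [CommMonoid M]
    (f : G →* M) : 0 < orderOf f := by
  refine orderOf_pos_iff.2 (isOfFinOrder_iff_pow_eq_one.2 ⟨Nat.card G, Nat.card_pos, ?_⟩)
  ext g
  simp [← map_pow, pow_card_eq_one']

theorem Module.Basis.equivFun_self_eq_single {ι R M : Type*} [Fintype ι] [DecidableEq ι]
    [CommRing R] [AddCommGroup M] [Module R M] (b : Basis ι R M) (i : ι) :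
    b.equivFun (b i) = Pi.single i 1 := by
  rw [Basis.equivFun_apply, Basis.repr_self, Finsupp.single_eq_pi_single]

theorem Module.Basis.equivFun_apply_eq_of_forall {ι R M : Type*} [Fintype ι] [DecidableEq ι]
    [CommRing R] [AddCommGroup M] [Module R M] (b : Basis ι R M) (f : Module.End R M)
    (g : Module.End R (ι → R)) (hfg : ∀ i, b.equivFun (f (b i)) = g (Pi.single i 1)) (x : M) :
    b.equivFun (f x) = g (b.equivFun x) :=
  LinearMap.congr_fun (b.ext (f₁ := b.equivFun.toLinearMap ∘ₗ f)
    (f₂ := g ∘ₗ b.equivFun.toLinearMap) fun i => by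
      simpa only [LinearMap.comp_apply, LinearEquiv.coe_coe, b.equivFun_self_eq_single]
        using hfg i) x

section CyclicOrbit

variable {R M : Type*} [Semiring R] [AddCommMonoid M] [Module R M] {r : ℕ} {X : Module.End R M}

def cyclicOrbit (r : ℕ) (X : Module.End R M) (v : M) (i : ZMod r) : M := (X ^ i.val) v

theorem cyclicOrbit_natCast (hX : X ^ r = 1) (v : M) (k : ℕ) :
    cyclicOrbit r X v k = (X ^ k) v := by
  rw [cyclicOrbit, ZMod.val_natCast, ← pow_eq_pow_mod k hX]

theorem apply_cyclicOrbit [NeZero r] (hX : X ^ r = 1) (v : M) (i : ZMod r) :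
    X (cyclicOrbit r X v i) = cyclicOrbit r X v (i + 1) := by
  have hi : i + 1 = ((i.val + 1 : ℕ) : ZMod r) := by push_cast; rw [ZMod.natCast_zmod_val]
  rw [hi, cyclicOrbit_natCast hX, pow_succ', Module.End.mul_apply, cyclicOrbit]

theorem cyclicOrbit_ne_zero [NeZero r] (hX : X ^ r = 1) {v : M} (hv : v ≠ 0) (i : ZMod r) :
    cyclicOrbit r X v i ≠ 0 := by
  have hXu : IsUnit X := IsUnit.of_pow_eq_one hX (NeZero.ne r)
  have hinj := ((Module.End.isUnit_iff _).1 (hXu.pow i.val)).1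
  exact fun h => hv (hinj (h.trans (map_zero _).symm))

end CyclicOrbit

theorem wX_single (r : ℕ) (j : ZMod r) : wX r (Pi.single j 1) = Pi.single (j + 1) 1 := by
  funext i
  simp [wX, Pi.single_apply, sub_eq_iff_eq_add]

theorem wRho_single (r : ℕ) {Γ : Type*} [CommGroup Γ] (χ₁ η : Γ →* ℂˣ) (h : Γ) (j : ZMod r) :
    wRho r χ₁ η h (Pi.single j 1) = ((η h : ℂ) * (χ₁ h : ℂ) ^ j.val) • Pi.single j 1 := by
  funext i
  by_cases hij : i = j
  · subst hij; simp [wRho]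
  · simp [wRho, hij]

namespace IsBRep

variable {Γ : Type*} [CommGroup Γ] {χ₁ : Γ →* ℂˣ} {Λ : Subgroup Γ} {ξ : Λ →* ℂˣ} {r : ℕ}
  {V : Type*} [AddCommGroup V] [Module ℂ V] {ρ : Γ → Module.End ℂ V} {X : Module.End ℂ V}

theorem commute (hrep : IsBRep χ₁ Λ ξ r ρ X) (a b : Γ) : Commute (ρ a) (ρ b) := by
  rw [Commute, SemiconjBy, ← hrep.1, ← hrep.1, mul_comm]

theorem mul_pow_eq_smul_pow_mul (hrep : IsBRep χ₁ Λ ξ r ρ X) (h : Γ) (k : ℕ) :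
    ρ h * X ^ k = (χ₁ h : ℂ) ^ k • (X ^ k * ρ h) := by
  induction k with
  | zero => simp
  | succ k ih =>
    rw [pow_succ, ← mul_assoc, ih, smul_mul_assoc, mul_assoc, hrep.2.2.1, mul_smul_comm,
      smul_smul, ← pow_succ, ← mul_assoc, ← pow_succ]

theorem exists_character_eigenvector [Finite Γ] [FiniteDimensional ℂ V] [Nontrivial V]
    (hrep : IsBRep χ₁ Λ ξ r ρ X) :
    ∃ η : Γ →* ℂˣ, (∀ g : Λ, η g = ξ g) ∧ ∃ v : V, v ≠ 0 ∧ ∀ h, ρ h v = (η h : ℂ) • v := by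
  obtain ⟨v, hv, c, hc⟩ :=
    Module.End.exists_ne_zero_forall_apply_eq_smul_of_commute ρ hrep.commute
  have hinj : Function.Injective fun t : ℂ => t • v := smul_left_injective ℂ hv
  let c' : Γ →* ℂ :=
    { toFun := c
      map_one' := hinj <| by simp only [← hc, hrep.2.1, Module.End.one_apply, one_smul]
      map_mul' := fun a b => hinj <| by
        change c (a * b) • v = (c a * c b) • v
        rw [← hc, hrep.1, Module.End.mul_apply, hc, map_smul, hc, smul_smul, mul_comm] }
  refine ⟨c'.toHomUnits, fun g => Units.ext (hinj ?_), v, hv, hc⟩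
  change c g • v = (ξ g : ℂ) • v
  rw [← hc, hrep.2.2.2.2 g, LinearMap.smul_apply, Module.End.one_apply]

theorem apply_cyclicOrbit_eq_smul (hrep : IsBRep χ₁ Λ ξ r ρ X) {h : Γ} {c : ℂ} {v : V}
    (hv : ρ h v = c • v) (i : ZMod r) :
    ρ h (cyclicOrbit r X v i) = (c * (χ₁ h : ℂ) ^ i.val) • cyclicOrbit r X v i := by
  rw [cyclicOrbit, ← Module.End.mul_apply, hrep.mul_pow_eq_smul_pow_mul, LinearMap.smul_apply,
    Module.End.mul_apply, hv, map_smul, smul_smul, mul_comm]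

theorem linearIndependent_cyclicOrbit [Finite Γ] [NeZero r] (hrep : IsBRep χ₁ Λ ξ r ρ X)
    (hχ : orderOf χ₁ = r) {η : Γ →* ℂˣ} {v : V} (hv : v ≠ 0)
    (hηv : ∀ h, ρ h v = (η h : ℂ) • v) :
    LinearIndependent ℂ (cyclicOrbit r X v) := by
  obtain ⟨h₀, hh₀⟩ := χ₁.exists_orderOf_apply_eq_orderOf
  have hord : orderOf (χ₁ h₀ : ℂ) = r := by rw [orderOf_units, hh₀, hχ]
  refine Module.End.eigenvectors_linearIndependent' (ρ h₀)
    (fun i : ZMod r => (η h₀ : ℂ) * (χ₁ h₀ : ℂ) ^ i.val) (fun i j hij => ?_) _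
    fun i => ⟨Module.End.mem_eigenspace_iff.2 (hrep.apply_cyclicOrbit_eq_smul (hηv h₀) i),
      cyclicOrbit_ne_zero hrep.2.2.2.1 hv i⟩
  have hpow := mul_left_cancel₀ (η h₀).ne_zero hij
  exact ZMod.val_injective r <| pow_injOn_Iio_orderOf (by simp [hord, ZMod.val_lt])
    (by simp [hord, ZMod.val_lt]) hpow

theorem span_cyclicOrbit_eq_top [NeZero r] (hrep : IsBRep χ₁ Λ ξ r ρ X) (hirr : BIrred ρ X)
    {η : Γ →* ℂˣ} {v : V} (hv : v ≠ 0) (hηv : ∀ h, ρ h v = (η h : ℂ) • v) :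
    Submodule.span ℂ (Set.range (cyclicOrbit r X v)) = ⊤ := by
  set S := Submodule.span ℂ (Set.range (cyclicOrbit r X v))
  have hstable : ∀ f : Module.End ℂ V, (∀ i, f (cyclicOrbit r X v i) ∈ S) → ∀ x ∈ S, f x ∈ S :=
    fun f hf x hx => (Submodule.map_span_le f _ S).2 (Set.forall_mem_range.2 hf)
      (Submodule.mem_map_of_mem hx)
  refine (hirr.2 S ⟨hstable X fun i => ?_, fun h => hstable (ρ h) fun i => ?_⟩).resolve_left
    fun hbot => ?_
  · rw [apply_cyclicOrbit hrep.2.2.2.1]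
    exact Submodule.subset_span ⟨i + 1, rfl⟩
  · rw [hrep.apply_cyclicOrbit_eq_smul (hηv h)]
    exact S.smul_mem _ (Submodule.subset_span ⟨i, rfl⟩)
  · have h0 : cyclicOrbit r X v 0 ∈ S := Submodule.subset_span ⟨0, rfl⟩
    rw [hbot, Submodule.mem_bot] at h0
    exact cyclicOrbit_ne_zero hrep.2.2.2.1 hv 0 h0

end IsBRep

theorem irreducible_BRep_iso_W_general {Γ : Type*} [CommGroup Γ] [Fintype Γ] (r : ℕ)
    (χ₁ : Γ →* ℂˣ) (hχ : orderOf χ₁ = r)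
    (Λ : Subgroup Γ) (ξ : ↥Λ →* ℂˣ)
    (V : Type*) [AddCommGroup V] [Module ℂ V] [FiniteDimensional ℂ V]
    (ρ : Γ → Module.End ℂ V) (X : Module.End ℂ V)
    (hrep : IsBRep χ₁ Λ ξ r ρ X) (hirr : BIrred ρ X) :
    ∃ η : Γ →* ℂˣ, (∀ g : Λ, η (g : Γ) = ξ g) ∧
      ∃ φ : V ≃ₗ[ℂ] (ZMod r → ℂ),
        (∀ v : V, φ (X v) = wX r (φ v)) ∧
        ∀ (h : Γ) (v : V), φ (ρ h v) = wRho r χ₁ η h (φ v) := by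
  have : NeZero r := ⟨hχ ▸ χ₁.orderOf_pos.ne'⟩
  obtain ⟨v₀, hv₀⟩ := hirr.1
  have : Nontrivial V := nontrivial_of_ne v₀ 0 hv₀
  obtain ⟨η, hηξ, v, hv, hηv⟩ := hrep.exists_character_eigenvector
  let b := Basis.mk (hrep.linearIndependent_cyclicOrbit hχ hv hηv)
    (hrep.span_cyclicOrbit_eq_top hirr hv hηv).ge
  have hb : ∀ i, b i = cyclicOrbit r X v i := Basis.mk_apply _ _
  refine ⟨η, hηξ, b.equivFun, b.equivFun_apply_eq_of_forall X (wX r) fun i => ?_,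
    fun h => b.equivFun_apply_eq_of_forall (ρ h) (wRho r χ₁ η h) fun i => ?_⟩
  · rw [hb, apply_cyclicOrbit hrep.2.2.2.1, ← hb, b.equivFun_self_eq_single, wX_single]
  · rw [hb, hrep.apply_cyclicOrbit_eq_smul (hηv h), ← hb, map_smul, b.equivFun_self_eq_single,
      wRho_single]

/-- Case (II), Lemma "basic", classification: every irreducible `B(ξ)`-representation
`(V, ρ, X)` is isomorphic to `W(η)` for some character `η` of `Γ` with `η|_Λ = ξ`, via a
linear isomorphism intertwining `X` and every `ρ(h)`. -/
theorem irreducible_BRep_iso_W {Γ : Type*} [CommGroup Γ] [Fintype Γ] (r : ℕ) (hr : 1 < r)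
    (χ₁ : Γ →* ℂˣ) (hχ : orderOf χ₁ = r)
    (Λ : Subgroup Γ) (hΛ : ∀ g ∈ Λ, χ₁ g = 1) (ξ : ↥Λ →* ℂˣ)
    (V : Type*) [AddCommGroup V] [Module ℂ V] [FiniteDimensional ℂ V]
    (ρ : Γ → Module.End ℂ V) (X : Module.End ℂ V)
    (hrep : IsBRep χ₁ Λ ξ r ρ X) (hirr : BIrred ρ X) :
    ∃ η : Γ →* ℂˣ, (∀ g : Λ, η (g : Γ) = ξ g) ∧
      ∃ φ : V ≃ₗ[ℂ] (ZMod r → ℂ),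
        (∀ v : V, φ (X v) = wX r (φ v)) ∧
        ∀ (h : Γ) (v : V), φ (ρ h v) = wRho r χ₁ η h (φ v) :=
  irreducible_BRep_iso_W_general r χ₁ hχ Λ ξ V ρ X hrep hirr
end
end

section
/- For characters η, η' of Γ with η|_Λ = η'|_Λ = ξ, the B(ξ)-representations W(η) and W(η') are isomorphic if and only if η = η'·χ₁^m for some integer m. -/
noncomputable section

lemma units_zpow_congr {r : ℕ} {u : ℂˣ} (hu : u ^ r = 1) {a b : ℤ}
    (h : (a : ZMod r) = (b : ZMod r)) : u ^ a = u ^ b := by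
  obtain ⟨t, ht⟩ := (ZMod.intCast_eq_intCast_iff_dvd_sub a b r).mp h
  have hb : b = a + r * t := by linarith
  rw [hb, zpow_add, zpow_mul, zpow_natCast, hu, one_zpow, mul_one]

/-- Case (II), Lemma "basic", uniqueness: for characters `η, η'` of `Γ` restricting to `ξ`
on `Λ`, the representations `W(η)` and `W(η')` are isomorphic (via a linear isomorphism
intertwining `X` and every `ρ(h)`) if and only if `η = η'·χ₁^m` for some integer `m`. -/
theorem W_iso_W_iff {Γ : Type*} [CommGroup Γ] [Fintype Γ] (r : ℕ) (hr : 1 < r)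
    (χ₁ : Γ →* ℂˣ) (hχ : orderOf χ₁ = r)
    (Λ : Subgroup Γ) (hΛ : ∀ g ∈ Λ, χ₁ g = 1) (ξ : ↥Λ →* ℂˣ)
    (η η' : Γ →* ℂˣ) (hη : ∀ g : Λ, η (g : Γ) = ξ g) (hη' : ∀ g : Λ, η' (g : Γ) = ξ g) :
    (∃ φ : (ZMod r → ℂ) ≃ₗ[ℂ] (ZMod r → ℂ),
        (∀ v : ZMod r → ℂ, φ (wX r v) = wX r (φ v)) ∧
        ∀ (h : Γ) (v : ZMod r → ℂ), φ (wRho r χ₁ η h v) = wRho r χ₁ η' h (φ v)) ↔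
      ∃ m : ℤ, η = η' * χ₁ ^ m := by
  haveI : NeZero r := ⟨by omega⟩
  have hχr : ∀ h : Γ, (χ₁ h) ^ r = 1 := by
    intro h
    have h1 : χ₁ ^ r = 1 := by rw [← hχ]; exact pow_orderOf_eq_one χ₁
    have := congrArg (fun f : Γ →* ℂˣ => f h) h1
    simpa using this
  constructor
  · rintro ⟨φ, hX, hρ⟩
    set v₀ : ZMod r → ℂ := fun j => if j = 0 then 1 else 0 with hv₀def
    have hv₀ : ∀ h : Γ, wRho r χ₁ η h v₀ = (η h : ℂ) • v₀ := by
      intro h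
      funext i
      show (η h : ℂ) * (χ₁ h : ℂ) ^ i.val * v₀ i = (η h : ℂ) * v₀ i
      by_cases hi : i = 0
      · subst hi; simp [hv₀def]
      · simp [hv₀def, hi]
    have hw0 : φ v₀ ≠ 0 := by
      intro h0
      have hv : v₀ = 0 := φ.injective (h0.trans (map_zero φ).symm)
      have := congrFun hv 0
      simp [hv₀def] at this
    obtain ⟨i, hwi⟩ : ∃ i, φ v₀ i ≠ 0 := by
      by_contra hc
      push_neg at hc
      exact hw0 (funext hc)
    refine ⟨(i.val : ℤ), ?_⟩
    ext h
    have h1 : φ (wRho r χ₁ η h v₀) = wRho r χ₁ η' h (φ v₀) := hρ h v₀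
    rw [hv₀ h, map_smul] at h1
    have h2 := congrFun h1 i
    have h3 : (η h : ℂ) * (φ v₀ i) = (η' h : ℂ) * (χ₁ h : ℂ) ^ i.val * (φ v₀ i) := by
      simpa [wRho, smul_eq_mul] using h2
    have h4 : (η h : ℂ) = (η' h : ℂ) * (χ₁ h : ℂ) ^ i.val :=
      mul_right_cancel₀ hwi h3
    show (η h : ℂ) = ((η' * χ₁ ^ ((i.val : ℤ))) h : ℂ)
    have hz : (η' * χ₁ ^ ((i.val : ℤ))) h = η' h * χ₁ h ^ ((i.val : ℤ)) := rfl
    rw [hz, zpow_natCast]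
    push_cast
    exact h4
  · rintro ⟨m, hm⟩
    refine ⟨⟨⟨⟨fun v => fun i => v (i - (m : ZMod r)), fun v w => rfl⟩, fun a v => rfl⟩,
      fun v => fun i => v (i + (m : ZMod r)), fun v => by funext i; simp,
      fun v => by funext i; simp⟩, ?_, ?_⟩
    · intro v
      funext i
      show v (i - (m : ZMod r) - 1) = v (i - 1 - (m : ZMod r))
      rw [sub_right_comm]
    · intro h v
      funext i
      show (η h : ℂ) * (χ₁ h : ℂ) ^ (i - (m : ZMod r)).val * v (i - (m : ZMod r)) =
        (η' h : ℂ) * (χ₁ h : ℂ) ^ i.val * v (i - (m : ZMod r))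
      congr 1
      have key : η h * χ₁ h ^ ((i - (m : ZMod r)).val : ℤ) = η' h * χ₁ h ^ ((i.val : ℤ)) := by
        have hmh : η h = η' h * χ₁ h ^ m := by
          have := congrArg (fun f : Γ →* ℂˣ => f h) hm
          simpa using this
        rw [hmh, mul_assoc, ← zpow_add]
        congr 1
        apply units_zpow_congr (hχr h)
        push_cast
        rw [ZMod.natCast_val, ZMod.natCast_val, ZMod.cast_id, ZMod.cast_id]
        ring
      have := congrArg (Units.val) key
      push_cast at this
      exact_mod_cast this
end
end
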